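/- Every Fitch map ε satisfies the inequality condition: for every complementary neighborhood N = N_{¬m}[y] ∈ N[ε] and every y' ∈ N, one has |N_{¬m}[y']| ≤ |N|. -/
import Mathlib


/-- A finite rooted phylogenetic tree on leaf set `X`, with vertex type `V`.
Vertices are encoded via a parent function; `par root = root`. -/
structure PhyloTree (V X : Type) : Type where
  fin : Finite V
  root : V
  par : V → V
  par_root : par root = root
  reach : ∀ v : V, ∃ n : ℕ, par^[n] v = root
  leaf : X → V
  leaf_inj : Function.Injective leaf
  leaf_isLeaf : ∀ (x : X) (u : V), par u = leaf x → u = leaf x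
  leaf_only : ∀ v : V, (∀ u : V, par u = v → u = v) → ∃ x : X, leaf x = v
  root_deg : (∃ x : X, leaf x = root) ∨ 2 ≤ {u : V | par u = root ∧ u ≠ root}.ncard
  inner_deg : ∀ v : V, v ≠ root → (¬ ∃ x : X, leaf x = v) →
      2 ≤ {u : V | par u = v ∧ u ≠ v}.ncard

namespace PhyloTree

variable {V X : Type}

/-- `T.anc u v` : `u` is an ancestor of `v`, i.e. `u ⪯_T v`. -/
def anc (T : PhyloTree V X) (u v : V) : Prop := ∃ n : ℕ, T.par^[n] v = u

/-- `l` is the last common ancestor of `a` and `b`. -/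
def IsLca (T : PhyloTree V X) (l a b : V) : Prop :=
  T.anc l a ∧ T.anc l b ∧ ∀ u : V, T.anc u a → T.anc u b → T.anc u l

/-- The cluster of `v`: the set of leaves below `v`. -/
def cluster (T : PhyloTree V X) (v : V) : Set X := {x : X | T.anc v (T.leaf x)}

/-- The cluster set `C(T)`. -/
def clusterSet (T : PhyloTree V X) : Set (Set X) := {S : Set X | ∃ v : V, S = T.cluster v}

/-- The edge `(par u, u)` lies on the descending path from `a` down to `b`. -/
def edgeOnDown (T : PhyloTree V X) (a b u : V) : Prop :=
  T.anc a u ∧ u ≠ a ∧ T.anc u b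

/-- The edge `(par u, u)` lies on the unique path between `v` and `w`. -/
def edgeOnPath (T : PhyloTree V X) (v w u : V) : Prop :=
  ∃ l : V, T.IsLca l v w ∧ (T.edgeOnDown l v u ∨ T.edgeOnDown l w u)

/-- `T` displays the rooted triple `ab|c`. -/
def Displays (T : PhyloTree V X) (a b c : X) : Prop :=
  ∃ l3 l2 : V, T.IsLca l2 (T.leaf a) (T.leaf b) ∧
    T.IsLca l3 l2 (T.leaf c) ∧ l3 ≠ l2

end PhyloTree

/-- `(T, lab)` explains `ε` : for distinct leaves `x,y`, `m ∈ ε x y` iff there is an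
`m`-edge on the path from `lca(x,y)` down to `y`. -/
def Explains {V X M : Type} (T : PhyloTree V X) (lab : V → Set M)
    (ε : X → X → Set M) : Prop :=
  ∀ x y : X, x ≠ y → ∀ m : M,
    (m ∈ ε x y ↔ ∃ l : V, T.IsLca l (T.leaf x) (T.leaf y) ∧
      ∃ u : V, T.edgeOnDown l (T.leaf y) u ∧ m ∈ lab u)

/-- `ε` is a Fitch map: it is explained by some edge-labeled phylogenetic tree. -/
def IsFitchMap {X M : Type} (ε : X → X → Set M) : Prop :=
  ∃ (V : Type) (T : PhyloTree V X) (lab : V → Set M), Explains T lab ε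

/-- The complementary neighborhood `N_{¬m}[y]`. -/
def Nbr {X M : Type} (ε : X → X → Set M) (m : M) (y : X) : Set X :=
  {x : X | x ≠ y ∧ m ∉ ε x y} ∪ {y}

/-- The collection `N[ε]` of all complementary neighborhoods. -/
def NbrSet {X M : Type} (ε : X → X → Set M) : Set (Set X) :=
  {N : Set X | ∃ (m : M) (y : X), N = Nbr ε m y}

/-- A set system is hierarchy-like if any two members intersect in `∅` or one of them. -/
def HLike {X : Type} (H : Set (Set X)) : Prop :=
  ∀ P ∈ H, ∀ Q ∈ H, P ∩ Q = P ∨ P ∩ Q = Q ∨ P ∩ Q = ∅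

/-- The inequality condition (IC). -/
def IneqCond {X M : Type} (ε : X → X → Set M) : Prop :=
  ∀ (m : M) (y y' : X), y' ∈ Nbr ε m y → (Nbr ε m y').ncard ≤ (Nbr ε m y).ncard



namespace PhyloTree

variable {V X : Type} {T : PhyloTree V X}

lemma anc_refl' (v : V) : T.anc v v := ⟨0, rfl⟩

lemma anc_trans' {u v w : V} (h1 : T.anc u v) (h2 : T.anc v w) : T.anc u w := by
  obtain ⟨a, ha⟩ := h1; obtain ⟨b, hb⟩ := h2
  exact ⟨a + b, by rw [Function.iterate_add_apply, hb, ha]⟩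

lemma par_iter_root (n : ℕ) : T.par^[n] T.root = T.root :=
  Function.iterate_fixed T.par_root n

lemma eq_root_of_cycle {v : V} {a : ℕ} (ha : 0 < a) (h : T.par^[a] v = v) :
    v = T.root := by
  obtain ⟨n, hn⟩ := T.reach v
  have hmul : ∀ k : ℕ, T.par^[a * k] v = v := by
    intro k
    induction k with
    | zero => simp
    | succ k ih => rw [Nat.mul_succ, Function.iterate_add_apply, h, ih]
  have hge : n ≤ a * n := Nat.le_mul_of_pos_left n ha
  calc v = T.par^[a * n] v := (hmul n).symm
    _ = T.par^[a * n - n] (T.par^[n] v) := by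
        rw [← Function.iterate_add_apply, Nat.sub_add_cancel hge]
    _ = T.root := by rw [hn, par_iter_root]

lemma anc_antisymm' {u v : V} (h1 : T.anc u v) (h2 : T.anc v u) : u = v := by
  obtain ⟨a, ha⟩ := h1; obtain ⟨b, hb⟩ := h2
  rcases Nat.eq_zero_or_pos (a + b) with h0 | hpos
  · have ha0 : a = 0 := by omega
    rw [ha0] at ha
    exact ha.symm
  · have hc : T.par^[a + b] u = u := by
      rw [Function.iterate_add_apply, hb, ha]
    have hu : u = T.root := eq_root_of_cycle hpos hc
    have hv : v = T.root := eq_root_of_cycle (a := b + a) (by omega)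
      (by rw [Function.iterate_add_apply, ha, hb])
    rw [hu, hv]

lemma anc_total' {u u' w : V} (h1 : T.anc u w) (h2 : T.anc u' w) :
    T.anc u u' ∨ T.anc u' u := by
  obtain ⟨i, hi⟩ := h1; obtain ⟨j, hj⟩ := h2
  rcases le_total i j with hle | hle
  · exact Or.inr ⟨j - i, by
      rw [← hi, ← Function.iterate_add_apply, Nat.sub_add_cancel hle, hj]⟩
  · exact Or.inl ⟨i - j, by
      rw [← hj, ← Function.iterate_add_apply, Nat.sub_add_cancel hle, hi]⟩

lemma exists_lca' (a b : V) : ∃ l, T.IsLca l a b := by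
  classical
  have hex : ∃ n, T.anc (T.par^[n] a) b := by
    obtain ⟨n, hn⟩ := T.reach a
    obtain ⟨p, hp⟩ := T.reach b
    exact ⟨n, ⟨p, by rw [hp, hn]⟩⟩
  refine ⟨T.par^[Nat.find hex] a, ⟨Nat.find hex, rfl⟩, Nat.find_spec hex, ?_⟩
  intro u hua hub
  obtain ⟨j, hj⟩ := hua
  have hij : Nat.find hex ≤ j := Nat.find_min' hex (by rw [hj]; exact hub)
  exact ⟨j - Nat.find hex, by
    rw [← Function.iterate_add_apply, Nat.sub_add_cancel hij, hj]⟩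

lemma eq_of_anc_root {l : V} (h : T.anc l T.root) : l = T.root := by
  obtain ⟨s, hs⟩ := h
  rw [← hs, par_iter_root]

end PhyloTree

section KeyLemmas

variable {V X M : Type} {T : PhyloTree V X} {lab : V → Set M} {m : M}
  {ε : X → X → Set M}

/-- If no edge strictly below `par^[k] w` (down to `w`) is an `m`-edge, then any edge
on a descending path from a vertex below `par^[k] w` down to `w` is not an `m`-edge. -/
lemma no_m_edge {w : V} {k : ℕ} (hfree : ∀ i < k, m ∉ lab (T.par^[i] w))
    {l u : V} (hvl : T.anc (T.par^[k] w) l) (hlu : T.anc l u) (hul : u ≠ l)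
    (huw : T.anc u w) : m ∉ lab u := by
  obtain ⟨i, hi⟩ := huw
  have hvu : T.anc (T.par^[k] w) u := PhyloTree.anc_trans' hvl hlu
  obtain ⟨t, ht⟩ := hvu
  rcases lt_or_ge i k with hik | hik
  · rw [← hi]; exact hfree i hik
  · exfalso
    have h1 : T.par^[t + i] w = T.par^[k] w := by
      rw [Function.iterate_add_apply, hi, ht]
    rcases Nat.eq_or_lt_of_le (le_trans hik (Nat.le_add_left i t)) with he | hlt
    · have hik' : i = k := by omega
      have hu : u = T.par^[k] w := by rw [← hi, hik']
      exact hul (PhyloTree.anc_antisymm' hlu (hu ▸ hvl)).symm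
    · have hroot : T.par^[k] w = T.root :=
        PhyloTree.eq_root_of_cycle (a := t + i - k) (by omega)
          (by rw [← Function.iterate_add_apply, Nat.sub_add_cancel (le_of_lt hlt), h1])
      have hu : u = T.root := by
        rw [← hi]
        have h2 : T.par^[i] w = T.par^[i - k] (T.par^[k] w) := by
          rw [← Function.iterate_add_apply, Nat.sub_add_cancel hik]
        rw [h2, hroot, PhyloTree.par_iter_root]
      have hl : l = T.root := PhyloTree.eq_of_anc_root (hu ▸ hlu)
      exact hul (hu.trans hl.symm)

/-- The complementary neighborhood `N_{¬m}[z]` equals the cluster of the highest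
`m`-free ancestor of `z`. -/
lemma nbr_eq_cluster (hexp : Explains T lab ε) (z : X) {k : ℕ}
    (hfree : ∀ i < k, m ∉ lab (T.par^[i] (T.leaf z)))
    (hlab : T.par^[k] (T.leaf z) = T.root ∨ m ∈ lab (T.par^[k] (T.leaf z))) :
    Nbr ε m z = T.cluster (T.par^[k] (T.leaf z)) := by
  ext x
  simp only [Nbr, Set.mem_union, Set.mem_setOf_eq, Set.mem_singleton_iff,
    PhyloTree.cluster]
  constructor
  · rintro (⟨hxz, hxm⟩ | rfl)
    · obtain ⟨l, hl⟩ := PhyloTree.exists_lca' (T := T) (T.leaf x) (T.leaf z)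
      have hvz : T.anc (T.par^[k] (T.leaf z)) (T.leaf z) := ⟨k, rfl⟩
      rcases PhyloTree.anc_total' hvz hl.2.1 with hvl | hlv
      · exact PhyloTree.anc_trans' hvl hl.1
      · by_cases heq : T.par^[k] (T.leaf z) = l
        · rw [heq]; exact hl.1
        · exfalso
          apply hxm
          refine (hexp x z hxz m).mpr ⟨l, hl, T.par^[k] (T.leaf z), ⟨hlv, heq, hvz⟩, ?_⟩
          rcases hlab with hroot | hm
          · exact absurd (hroot.trans (PhyloTree.eq_of_anc_root (hroot ▸ hlv)).symm) heq
          · exact hm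
    · exact ⟨k, rfl⟩
  · intro hx
    by_cases hxz : x = z
    · exact Or.inr hxz
    · refine Or.inl ⟨hxz, fun hmem => ?_⟩
      obtain ⟨l, hl, u, ⟨hlu, hul, huw⟩, hmu⟩ := (hexp x z hxz m).mp hmem
      have hvl : T.anc (T.par^[k] (T.leaf z)) l := hl.2.2 _ hx ⟨k, rfl⟩
      exact no_m_edge hfree hvl hlu hul huw hmu

/-- Claim B: the apex for `y'` lies below the apex for `y` whenever `y'` is in the
cluster of the apex of `y`. -/
lemma anc_apex_apex {w w' : V} {k k' : ℕ}
    (hfree' : ∀ i < k', m ∉ lab (T.par^[i] w'))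
    (hlab : T.par^[k] w = T.root ∨ m ∈ lab (T.par^[k] w))
    (hcl : T.anc (T.par^[k] w) w') :
    T.anc (T.par^[k] w) (T.par^[k'] w') := by
  have h1 : T.anc (T.par^[k'] w') w' := ⟨k', rfl⟩
  rcases PhyloTree.anc_total' hcl h1 with h | h
  · exact h
  · by_cases heq : T.par^[k] w = T.par^[k'] w'
    · rw [heq]; exact PhyloTree.anc_refl' _
    · exfalso
      have hvroot : T.par^[k] w ≠ T.root := by
        intro hr
        exact heq (hr.trans (PhyloTree.eq_of_anc_root (hr ▸ h)).symm)
      have hm : m ∈ lab (T.par^[k] w) := hlab.resolve_left hvroot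
      obtain ⟨i, hi⟩ := hcl
      rcases lt_or_ge i k' with hik | hik
      · exact (hi ▸ hfree' i hik) hm
      · have h2 : T.anc (T.par^[k] w) (T.par^[k'] w') :=
          ⟨i - k', by rw [← Function.iterate_add_apply, Nat.sub_add_cancel hik, hi]⟩
        exact heq (PhyloTree.anc_antisymm' h2 h)

end KeyLemmas

/-- every Fitch map satisfies the inequality condition (IC). -/
theorem fitch_IC {X M : Type} [Fintype X] [Fintype M] [Nonempty X] [Nonempty M]
    (ε : X → X → Set M) (h : IsFitchMap ε) :
    IneqCond ε := by
  classical
  obtain ⟨V, T, lab, hexp⟩ := h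
  intro m y y' hy'
  have hsub : Nbr ε m y' ⊆ Nbr ε m y := by
    have hk : ∀ z : X, ∃ kk : ℕ, (∀ i < kk, m ∉ lab (T.par^[i] (T.leaf z))) ∧
        (T.par^[kk] (T.leaf z) = T.root ∨ m ∈ lab (T.par^[kk] (T.leaf z))) := by
      intro z
      obtain ⟨n, hn⟩ := T.reach (T.leaf z)
      have hex : ∃ j, T.par^[j] (T.leaf z) = T.root ∨ m ∈ lab (T.par^[j] (T.leaf z)) :=
        ⟨n, Or.inl hn⟩
      refine ⟨Nat.find hex, fun i hi => ?_, Nat.find_spec hex⟩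
      have hmin := Nat.find_min hex hi
      push_neg at hmin
      exact hmin.2
    obtain ⟨k, hkfree, hklab⟩ := hk y
    obtain ⟨k', hkfree', hklab'⟩ := hk y'
    have hA : Nbr ε m y = T.cluster (T.par^[k] (T.leaf y)) :=
      nbr_eq_cluster hexp y hkfree hklab
    have hA' : Nbr ε m y' = T.cluster (T.par^[k'] (T.leaf y')) :=
      nbr_eq_cluster hexp y' hkfree' hklab'
    have hcl : T.anc (T.par^[k] (T.leaf y)) (T.leaf y') := by
      have hmem : y' ∈ T.cluster (T.par^[k] (T.leaf y)) := hA ▸ hy'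
      exact hmem
    have hanc := anc_apex_apex hkfree' hklab hcl
    rw [hA, hA']
    intro x hx
    exact PhyloTree.anc_trans' hanc hx
  exact Set.ncard_le_ncard hsub (Set.toFinite _)
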